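/- Let n ≥ 4, let A = {1, …, ⌊n/2⌋} and B = [n] \ A, and fix a linear order β on B. For a permutation σ of A, let P(σ) be the Hamilton path of the complete bipartite graph K_{⌊n/2⌋,⌈n/2⌉} (with parts A and B) that starts at the first element of β and alternates elements of B (in the order β, occupying the odd positions along the path) with elements of A (in the order σ). If two permutations σ and σ' of A are 2-different — i.e., there is an element a ∈ A whose position in σ and whose position in σ' differ by at least 2 and neither of these two positions is the last position ⌊n/2⌋ — then the Hamilton paths P(σ) and P(σ') are crossing: their union has a vertex of degree 4. -/
import Mathlib


/-- The edge set of the path on `Fin n` visiting vertices in the order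
`f 0, f 1, …, f (n-1)`. -/
def pathEdgesOf (n : ℕ) (f : Fin n → Fin n) : Finset (Sym2 (Fin n)) :=
  Finset.univ.image (fun p : {i : Fin n // (i : ℕ) + 1 < n} =>
    s(f p.1, f ⟨(p.1 : ℕ) + 1, p.2⟩))

/-- The vertex sequence of the Hamilton path `P(σ)` of the complete bipartite graph
with parts `A = {0, …, ⌊n/2⌋ - 1}` and `B = {⌊n/2⌋, …, n-1}`: the elements of `B`
occupy the even (0-indexed) positions in the order `β`, the elements of `A` occupy
the odd positions in the order `σ`. -/
def interleave (n : ℕ) (β : Fin (n - n / 2) → Fin n) (σ : Fin (n / 2) → Fin n) :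
    Fin n → Fin n :=
  fun k =>
    if h : (k : ℕ) % 2 = 0 then β ⟨(k : ℕ) / 2, by have := k.isLt; omega⟩
    else σ ⟨(k : ℕ) / 2, by have := k.isLt; omega⟩

lemma mem_pathEdgesOf {n : ℕ} {f : Fin n → Fin n} {e : Sym2 (Fin n)} :
    e ∈ pathEdgesOf n f ↔ ∃ k : ℕ, ∃ h : k + 1 < n,
      e = s(f ⟨k, by omega⟩, f ⟨k + 1, h⟩) := by
  constructor
  · intro he
    simp only [pathEdgesOf, Finset.mem_image, Finset.mem_univ, true_and] at he
    obtain ⟨⟨⟨k, hk⟩, hk2⟩, rfl⟩ := he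
    exact ⟨k, hk2, rfl⟩
  · rintro ⟨k, h, rfl⟩
    simp only [pathEdgesOf, Finset.mem_image, Finset.mem_univ, true_and]
    exact ⟨⟨⟨k, by omega⟩, h⟩, rfl⟩

lemma interleave_even {n : ℕ} (β : Fin (n - n / 2) → Fin n) (σ : Fin (n / 2) → Fin n)
    (k : ℕ) (hk : 2 * k < n) (hk' : k < n - n / 2) :
    interleave n β σ ⟨2 * k, hk⟩ = β ⟨k, hk'⟩ := by
  have h0 : ((⟨2 * k, hk⟩ : Fin n) : ℕ) % 2 = 0 := by show 2 * k % 2 = 0; omega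
  unfold interleave
  rw [dif_pos h0]
  congr 1
  apply Fin.ext
  show 2 * k / 2 = k
  omega

lemma interleave_odd {n : ℕ} (β : Fin (n - n / 2) → Fin n) (σ : Fin (n / 2) → Fin n)
    (k : ℕ) (hk : 2 * k + 1 < n) (hk' : k < n / 2) :
    interleave n β σ ⟨2 * k + 1, hk⟩ = σ ⟨k, hk'⟩ := by
  have h0 : ¬((⟨2 * k + 1, hk⟩ : Fin n) : ℕ) % 2 = 0 := by
    show ¬(2 * k + 1) % 2 = 0; omega
  unfold interleave
  rw [dif_neg h0]
  congr 1
  apply Fin.ext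
  show (2 * k + 1) / 2 = k
  omega

lemma interleave_inj {n : ℕ} {β : Fin (n - n / 2) → Fin n} {σ : Fin (n / 2) → Fin n}
    (hβ : Function.Injective β) (hβB : ∀ i, n / 2 ≤ (β i : ℕ))
    (hσ : Function.Injective σ) (hσA : ∀ i, (σ i : ℕ) < n / 2) :
    Function.Injective (interleave n β σ) := by
  intro k k' h
  unfold interleave at h
  split_ifs at h with h1 h2 h2
  · have := hβ h
    have h3 : (k : ℕ) / 2 = (k' : ℕ) / 2 := congrArg Fin.val this
    ext
    omega
  · have h4 := congrArg Fin.val h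
    have := hβB ⟨(k : ℕ) / 2, by have := k.isLt; omega⟩
    have := hσA ⟨(k' : ℕ) / 2, by have := k'.isLt; omega⟩
    omega
  · have h4 := congrArg Fin.val h
    have := hβB ⟨(k' : ℕ) / 2, by have := k'.isLt; omega⟩
    have := hσA ⟨(k : ℕ) / 2, by have := k.isLt; omega⟩
    omega
  · have := hσ h
    have h3 : (k : ℕ) / 2 = (k' : ℕ) / 2 := congrArg Fin.val this
    ext
    omega

lemma filter_pathEdges {n : ℕ} {f : Fin n → Fin n} (hf : Function.Injective f)
    {v : Fin n} {m : ℕ} (hm1 : 0 < m) (hm2 : m + 1 < n) (hm : m < n) (hm0 : m - 1 < n)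
    (hfv : f ⟨m, hm⟩ = v) :
    (pathEdgesOf n f).filter (fun e => v ∈ e)
      = {s(v, f ⟨m - 1, hm0⟩), s(v, f ⟨m + 1, hm2⟩)} := by
  ext e
  simp only [Finset.mem_filter, mem_pathEdgesOf, Finset.mem_insert, Finset.mem_singleton]
  constructor
  · rintro ⟨⟨k, hk, rfl⟩, hv⟩
    rcases Sym2.mem_iff.mp hv with h | h
    · have hkm : k = m := by
        have := hf (h.symm.trans hfv.symm)
        exact congrArg Fin.val this
      subst hkm
      right
      rw [← hfv]
    · have hkm : k + 1 = m := by
        have := hf (h.symm.trans hfv.symm)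
        exact congrArg Fin.val this
      left
      have hk1 : (⟨k, by omega⟩ : Fin n) = ⟨m - 1, hm0⟩ := by
        apply Fin.ext; show k = m - 1; omega
      have hk2 : (⟨k + 1, hk⟩ : Fin n) = ⟨m, hm⟩ := by
        apply Fin.ext; show k + 1 = m; omega
      rw [hk1, hk2, hfv, Sym2.eq_swap]
  · rintro (rfl | rfl)
    · refine ⟨⟨m - 1, by omega, ?_⟩, Sym2.mem_mk_left _ _⟩
      have hk2 : (⟨m - 1 + 1, by omega⟩ : Fin n) = ⟨m, hm⟩ := by
        apply Fin.ext; show m - 1 + 1 = m; omega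
      rw [hk2, hfv, Sym2.eq_swap]
    · exact ⟨⟨m, hm2, by rw [← hfv]⟩, Sym2.mem_mk_left _ _⟩

lemma filter_interleave {n : ℕ} {β : Fin (n - n / 2) → Fin n} {σ : Fin (n / 2) → Fin n}
    (hβ : Function.Injective β) (hβB : ∀ i, n / 2 ≤ (β i : ℕ))
    (hσ : Function.Injective σ) (hσA : ∀ i, (σ i : ℕ) < n / 2)
    {v : Fin n} (i : ℕ) (hin : i < n / 2) (hi0 : i < n - n / 2)
    (hi2 : i + 1 < n - n / 2) (hi : i + 1 < n / 2)
    (hvi : σ ⟨i, hin⟩ = v) :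
    (pathEdgesOf n (interleave n β σ)).filter (fun e => v ∈ e)
      = {s(v, β ⟨i, hi0⟩), s(v, β ⟨i + 1, hi2⟩)} := by
  have h21 : 2 * i + 1 < n := by omega
  have h20 : 2 * i + 1 - 1 < n := by omega
  have h22 : 2 * i + 1 + 1 < n := by omega
  have e1 : interleave n β σ ⟨2 * i + 1 - 1, h20⟩ = β ⟨i, hi0⟩ := by
    have hx : (⟨2 * i + 1 - 1, h20⟩ : Fin n) = ⟨2 * i, by omega⟩ := by
      apply Fin.ext; show 2 * i + 1 - 1 = 2 * i; omega
    rw [hx, interleave_even β σ i (by omega) hi0]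
  have e2 : interleave n β σ ⟨2 * i + 1 + 1, h22⟩ = β ⟨i + 1, hi2⟩ := by
    have hx : (⟨2 * i + 1 + 1, h22⟩ : Fin n) = ⟨2 * (i + 1), by omega⟩ := by
      apply Fin.ext; show 2 * i + 1 + 1 = 2 * (i + 1); omega
    rw [hx, interleave_even β σ (i + 1) (by omega) hi2]
  have hfv : interleave n β σ ⟨2 * i + 1, h21⟩ = v := by
    rw [interleave_odd β σ i h21 hin]; exact hvi
  rw [filter_pathEdges (interleave_inj hβ hβB hσ hσA) (by omega) h22 h21 h20 hfv, e1, e2]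

/-- If two permutations `σ, σ'` of the part `A` are 2-different — some element `a ∈ A`
occupies, in `σ` and in `σ'`, positions differing by at least 2, neither position being
the last one — then the Hamilton paths `P(σ)` and `P(σ')` of the complete bipartite graph
`K_{⌊n/2⌋, ⌈n/2⌉}` are crossing: their union has a vertex of degree 4. -/
theorem stmt3 (n : ℕ) (hn : 4 ≤ n)
    (β : Fin (n - n / 2) → Fin n) (hβinj : Function.Injective β)
    (hβB : ∀ i, n / 2 ≤ (β i : ℕ))
    (σ σ' : Fin (n / 2) → Fin n)
    (hσinj : Function.Injective σ) (hσA : ∀ i, (σ i : ℕ) < n / 2)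
    (hσ'inj : Function.Injective σ') (hσ'A : ∀ i, (σ' i : ℕ) < n / 2)
    (hdiff : ∃ i j : Fin (n / 2), σ i = σ' j ∧
      2 ≤ ((i : ℤ) - (j : ℤ)).natAbs ∧ (i : ℕ) + 1 ≠ n / 2 ∧ (j : ℕ) + 1 ≠ n / 2) :
    ∃ v : Fin n,
      (((pathEdgesOf n (interleave n β σ)) ∪ (pathEdgesOf n (interleave n β σ'))).filter
        (fun e => v ∈ e)).card = 4 := by
  obtain ⟨i, j, hij, h2, hi1, hj1⟩ := hdiff
  have hn2 : n / 2 ≤ n - n / 2 := by omega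
  have hii : (i : ℕ) < n / 2 := i.isLt
  have hjj : (j : ℕ) < n / 2 := j.isLt
  have hine : (i : ℕ) + 1 < n / 2 := by omega
  have hjne : (j : ℕ) + 1 < n / 2 := by omega
  have habs : (i : ℕ) + 2 ≤ (j : ℕ) ∨ (j : ℕ) + 2 ≤ (i : ℕ) := by omega
  have hIA : (i : ℕ) < n - n / 2 := by omega
  have hIB : (i : ℕ) + 1 < n - n / 2 := by omega
  have hJA : (j : ℕ) < n - n / 2 := by omega
  have hJB : (j : ℕ) + 1 < n - n / 2 := by omega
  refine ⟨σ i, ?_⟩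
  rw [Finset.filter_union,
      filter_interleave hβinj hβB hσinj hσA (i : ℕ) hii hIA hIB hine rfl,
      filter_interleave hβinj hβB hσ'inj hσ'A (j : ℕ) hjj hJA hJB hjne hij.symm]
  have hbne : ∀ a b : ℕ, ∀ (ha : a < n - n / 2) (hb : b < n - n / 2), a ≠ b →
      β ⟨a, ha⟩ ≠ β ⟨b, hb⟩ := by
    intro a b ha hb hab h
    exact hab (congrArg Fin.val (hβinj h))
  have hset : ({s(σ i, β ⟨(i : ℕ), hIA⟩), s(σ i, β ⟨(i : ℕ) + 1, hIB⟩)} ∪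
      {s(σ i, β ⟨(j : ℕ), hJA⟩), s(σ i, β ⟨(j : ℕ) + 1, hJB⟩)} :
        Finset (Sym2 (Fin n))) =
      {s(σ i, β ⟨(i : ℕ), hIA⟩), s(σ i, β ⟨(i : ℕ) + 1, hIB⟩),
        s(σ i, β ⟨(j : ℕ), hJA⟩), s(σ i, β ⟨(j : ℕ) + 1, hJB⟩)} := by
    ext e
    simp only [Finset.mem_union, Finset.mem_insert, Finset.mem_singleton]
    tauto
  rw [hset]
  rw [Finset.card_insert_of_notMem, Finset.card_insert_of_notMem,
      Finset.card_insert_of_notMem, Finset.card_singleton]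
  · simp only [Finset.mem_singleton, Sym2.congr_right]
    exact hbne _ _ _ _ (by omega)
  · simp only [Finset.mem_insert, Finset.mem_singleton, Sym2.congr_right]
    push_neg
    exact ⟨hbne _ _ _ _ (by omega), hbne _ _ _ _ (by omega)⟩
  · simp only [Finset.mem_insert, Finset.mem_singleton, Sym2.congr_right]
    push_neg
    exact ⟨hbne _ _ _ _ (by omega), hbne _ _ _ _ (by omega), hbne _ _ _ _ (by omega)⟩
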